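/- arXiv:1506.04381 — 3 statements merged into one kernel-verified Lean document; each statement's English description precedes it below -/
import Mathlib

section
/- If x satisfies 4 - 19(3x) - 22(3x)^2 - 107(3x)^3 = 0 and 0 < x < 1/12, then 2*sqrt(x(1+18x^2)/(1-12x)) = 3x(1+15x)/(1-12x). -/
theorem two_mul_sqrt_div_eq_div {a b d : ℝ} (hd : 0 < d) (hb : 0 ≤ b) (h : 4 * a * d = b ^ 2) :
    2 * Real.sqrt (a / d) = b / d := by
  have hsq : a / d = (b / (2 * d)) ^ 2 := by
    field_simp
    linear_combination h
  rw [hsq, Real.sqrt_sq (by positivity)]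
  field_simp

theorem fixed_point_sqrt_identity (x : ℝ)
    (hroot : 4 - 19*(3*x) - 22*(3*x)^2 - 107*(3*x)^3 = 0)
    (hx0 : 0 < x) (hx1 : x < 1/12) :
    2 * Real.sqrt (x*(1+18*x^2)/(1-12*x)) = 3*x*(1+15*x)/(1-12*x) := by
  apply two_mul_sqrt_div_eq_div (by linarith) (by positivity)
  linear_combination x * hroot
end

section
/- Let R be the hierarchical Kondo beta function on ℝ⁴ (as in the previous context). Let x₀ be the real root of 4 - 19x - 22x² - 107x³ = 0. Then ℓ* = (-x₀(1+5x₀)/(1-4x₀), x₀/3, 1/3, x₀/18) is a fixed point of R. -/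
/-!
On the ansatz `ℓ = (a, x/3, 1/3, x/18)` the third fixed-point equation holds identically and the
second and fourth coincide, so `R ℓ = ℓ` reduces to `3a² + 2a + 2x² - 2x = 0` (the first equation
divided by `a`) and `3a²(1 - 4x) = 4x(1 + 2x²)`. Eliminating `a²` between them gives
`a(1 - 4x) = -x(1 + 5x)`, and substituting this back into the second equation leaves `x` times the
cubic.
-/

noncomputable def kondoR (l : ℝ × ℝ × ℝ × ℝ) : ℝ × ℝ × ℝ × ℝ :=
  let l0 := l.1; let l1 := l.2.1; let l2 := l.2.2.1; let l3 := l.2.2.2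
  let C := 1 + 3*l0^2 + 9*l1^2 + 9*l2^2 + 324*l3^2
  ( (l0 + 18*l0*l3 + 3*l0*l2 + 3*l0*l1 - 2*l0^2) / C,
    ((1/2)*l1 + 9*l2*l3 + (1/4)*l0^2) / C,
    (2*l2 + 36*l1*l3 + l0^2) / C,
    ((1/2)*l3 + (1/4)*l1*l2 + (1/24)*l0^2) / C )

def kondoDenom (l0 l1 l2 l3 : ℝ) : ℝ := 1 + 3*l0^2 + 9*l1^2 + 9*l2^2 + 324*l3^2

lemma kondoDenom_pos (l0 l1 l2 l3 : ℝ) : 0 < kondoDenom l0 l1 l2 l3 := by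
  unfold kondoDenom
  positivity

theorem isFixedPt_kondoR_iff (l0 l1 l2 l3 : ℝ) :
    Function.IsFixedPt kondoR (l0, l1, l2, l3) ↔
      l0 + 18*l0*l3 + 3*l0*l2 + 3*l0*l1 - 2*l0^2 = l0 * kondoDenom l0 l1 l2 l3 ∧
      (1/2)*l1 + 9*l2*l3 + (1/4)*l0^2 = l1 * kondoDenom l0 l1 l2 l3 ∧
      2*l2 + 36*l1*l3 + l0^2 = l2 * kondoDenom l0 l1 l2 l3 ∧
      (1/2)*l3 + (1/4)*l1*l2 + (1/24)*l0^2 = l3 * kondoDenom l0 l1 l2 l3 := by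
  have hC : 1 + 3*l0^2 + 9*l1^2 + 9*l2^2 + 324*l3^2 ≠ 0 := (kondoDenom_pos l0 l1 l2 l3).ne'
  simp only [Function.IsFixedPt, kondoR, Prod.mk.injEq, div_eq_iff hC]
  exact Iff.rfl

theorem isFixedPt_kondoR_of {a x : ℝ} (h₁ : 3*a^2 + 2*a + 2*x^2 - 2*x = 0)
    (h₂ : 3*a^2*(1 - 4*x) = 4*x*(1 + 2*x^2)) :
    Function.IsFixedPt kondoR (a, x/3, 1/3, x/18) := by
  rw [isFixedPt_kondoR_iff]
  unfold kondoDenom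
  refine ⟨?_, ?_, ?_, ?_⟩
  · linear_combination (-a) * h₁
  · linear_combination (1/12) * h₂
  · ring
  · linear_combination (1/72) * h₂

lemma one_sub_four_mul_ne_zero {x : ℝ} (hroot : 4 - 19*x - 22*x^2 - 107*x^3 = 0) :
    1 - 4*x ≠ 0 := by
  intro h
  obtain rfl : x = 1/4 := by linarith
  norm_num at hroot

theorem nontrivial_fixed_point (x₀ : ℝ)
    (hroot : 4 - 19*x₀ - 22*x₀^2 - 107*x₀^3 = 0) :
    kondoR (-x₀*(1+5*x₀)/(1-4*x₀), x₀/3, 1/3, x₀/18)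
      = (-x₀*(1+5*x₀)/(1-4*x₀), x₀/3, 1/3, x₀/18) := by
  have hd := one_sub_four_mul_ne_zero hroot
  set a := -x₀*(1+5*x₀)/(1-4*x₀)
  have ha : a * (1 - 4*x₀) = -x₀*(1+5*x₀) := div_mul_cancel₀ _ hd
  have h₂ : 3*a^2*(1 - 4*x₀) = 4*x₀*(1 + 2*x₀^2) := by
    refine mul_right_cancel₀ hd ?_
    linear_combination 3 * (a*(1 - 4*x₀) - x₀*(1+5*x₀)) * ha - x₀ * hroot
  have h₁ : 3*a^2 + 2*a + 2*x₀^2 - 2*x₀ = 0 := by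
    refine (mul_eq_zero.mp ?_).resolve_left hd
    linear_combination h₂ + 2 * ha
  exact isFixedPt_kondoR_of h₁ h₂
end

section
/- If (ℓ₀,ℓ₁,ℓ₂,ℓ₃) is any fixed point of the hierarchical Kondo beta function R, then ℓ₁ = 6ℓ₃ and (1-3ℓ₂)·(ℓ₂(1+3ℓ₂) + 6ℓ₁² + ℓ₀²) = 0. In particular, if ℓ₂ ≥ 0 then either ℓ₀ = ℓ₁ = ℓ₂ = ℓ₃ = 0 or ℓ₂ = 1/3. -/
set_option maxHeartbeats 1000000


theorem fixed_point_necessary_conditions (l0 l1 l2 l3 : ℝ)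
    (hfix : kondoR (l0, l1, l2, l3) = (l0, l1, l2, l3)) :
    l1 = 6*l3 ∧
    (1 - 3*l2) * (l2*(1 + 3*l2) + 6*l1^2 + l0^2) = 0 ∧
    (0 ≤ l2 → (l0 = 0 ∧ l1 = 0 ∧ l2 = 0 ∧ l3 = 0) ∨ l2 = 1/3) := by
  simp only [kondoR, Prod.mk.injEq] at hfix
  obtain ⟨e0, e1, e2, e3⟩ := hfix
  have hCpos : (0:ℝ) < 1 + 3*l0^2 + 9*l1^2 + 9*l2^2 + 324*l3^2 := by positivity
  rw [div_eq_iff (ne_of_gt hCpos)] at e0 e1 e2 e3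
  have key : (l1 - 6*l3) * ((1 + 3*l0^2 + 9*l1^2 + 9*l2^2 + 324*l3^2) - 1/2 + (3/2)*l2) = 0 := by
    linear_combination 6*e3 - e1
  have hposf : (0:ℝ) < (1 + 3*l0^2 + 9*l1^2 + 9*l2^2 + 324*l3^2) - 1/2 + (3/2)*l2 := by
    nlinarith [sq_nonneg (l2 + 1/12), sq_nonneg l0, sq_nonneg l1, sq_nonneg l3]
  have h13 : l1 = 6*l3 := by
    rcases mul_eq_zero.mp key with h | h
    · linarith
    · exfalso; linarith
  have hprod : (1 - 3*l2) * (l2*(1 + 3*l2) + 6*l1^2 + l0^2) = 0 := by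
    linear_combination e2 + (6*l1 - 9*l2*l1 - 54*l2*l3) * h13
  refine ⟨h13, hprod, fun hl2 => ?_⟩
  by_cases hc : l2 = 1/3
  · exact Or.inr hc
  · left
    clear key e0 e1 e2 e3 hposf hCpos
    have hs : l2*(1 + 3*l2) + 6*l1^2 + l0^2 = 0 := by
      rcases mul_eq_zero.mp hprod with h | h
      · exact absurd (by linarith : l2 = 1/3) hc
      · exact h
    have hl2pos : 0 ≤ l2*(1 + 3*l2) := mul_nonneg hl2 (by linarith)
    have h0' : l0^2 = 0 := le_antisymm (by linarith [sq_nonneg l1]) (sq_nonneg l0)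
    have h1' : l1^2 = 0 := le_antisymm (by nlinarith [sq_nonneg l0]) (sq_nonneg l1)
    have h0 : l0 = 0 := by simpa using sq_eq_zero_iff.mp h0'
    have h1 : l1 = 0 := by simpa using sq_eq_zero_iff.mp h1'
    have h2 : l2 = 0 := by nlinarith [sq_nonneg l2]
    exact ⟨h0, h1, h2, by linarith⟩
end
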